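/- arXiv:2103.13743 — 2 statements merged into one kernel-verified Lean document; each statement's English description precedes it below -/
import Mathlib

section
/- Converse direction for assumptions, under extendability: let C1 = (D1, Ω1), C2 = (D2, Ω2), C = (D, Ω) be linear contracts defined by the data (𝔄¹, 𝔄⁰, 𝔞⁰, 𝔊¹, 𝔊⁰, 𝔤⁰), (𝔅¹, 𝔅⁰, 𝔟⁰, ℌ¹, ℌ⁰, 𝔥⁰) and (ℭ¹, ℭ⁰, 𝔠⁰, 𝔍¹, 𝔍⁰, 𝔧⁰), and write 𝔊^i = [𝔊^i_d, 𝔊^i_z] for i = 0, 1. Assume that (ℭ¹, ℭ⁰, 𝔠⁰) is extendable and that the stacked triple ([[ℭ¹, 0], [𝔊¹_d, 𝔊¹_z]], [[ℭ⁰, 0], [𝔊⁰_d, 𝔊⁰_z]], [𝔠⁰; 𝔤⁰]) is extendable. If D ⊆ D⊗, where D⊗ is the assumption set of the cascaded composition C1 ⊗ C2, then for all vectors d0, d1 ∈ ℝ^{nd}, z0, z1 ∈ ℝ^{nz}: (i) ℭ¹d1 + ℭ⁰d0 ≤ 𝔠⁰ implies 𝔄¹d1 + 𝔄⁰d0 ≤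 𝔞⁰, and (ii) ℭ¹d1 + ℭ⁰d0 ≤ 𝔠⁰ together with 𝔊¹[d1; z1] + 𝔊⁰[d0; z0] ≤ 𝔤⁰ implies 𝔅¹z1 + 𝔅⁰z0 ≤ 𝔟⁰. -/
open Matrix

/-- A discrete-time signal with values in `ℝ^n`. -/
abbrev Sig (n : ℕ) := ℕ → (Fin n → ℝ)

/-- The assumption set of a linear contract:
`{d : V¹ d(k+1) + V⁰ d(k) ≤ v⁰ for all k}` (entry-wise inequality). -/
def LinAssump {s n : ℕ} (V1 V0 : Matrix (Fin s) (Fin n) ℝ) (v0 : Fin s → ℝ) :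
    Set (Sig n) :=
  {d | ∀ k : ℕ, V1 *ᵥ d (k + 1) + V0 *ᵥ d k ≤ v0}

/-- The guarantee set of a linear contract:
`{(d, y) : W¹ [d(k+1); y(k+1)] + W⁰ [d(k); y(k)] ≤ w⁰ for all k}`, where the stacked
vector `[d; y]` is encoded as `Sum.elim d y : Fin na ⊕ Fin nb → ℝ`. -/
def LinGuar {s na nb : ℕ} (W1 W0 : Matrix (Fin s) (Fin na ⊕ Fin nb) ℝ) (w0 : Fin s → ℝ) :
    Set (Sig na × Sig nb) :=
  {p | ∀ k : ℕ,
    W1 *ᵥ Sum.elim (p.1 (k + 1)) (p.2 (k + 1)) + W0 *ᵥ Sum.elim (p.1 k) (p.2 k) ≤ w0}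

/-- Assumption set `D⊗` of the cascaded composition of contracts. -/
def CompD {nd nz : ℕ} (D1 : Set (Sig nd)) (Ω1 : Set (Sig nd × Sig nz))
    (D2 : Set (Sig nz)) : Set (Sig nd) :=
  {d | d ∈ D1 ∧ ∀ z : Sig nz, (d, z) ∈ Ω1 → z ∈ D2}

/-- Guarantee set `Ω⊗` of the cascaded composition of contracts. -/
def CompΩ {nd nz ny : ℕ} (Ω1 : Set (Sig nd × Sig nz)) (Ω2 : Set (Sig nz × Sig ny)) :
    Set (Sig nd × Sig ny) :=
  {p | ∃ z : Sig nz, (p.1, z) ∈ Ω1 ∧ (z, p.2) ∈ Ω2}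

/-- A triple `(V¹, V⁰, v⁰)` is extendable if any one-step-feasible pair `(u0, u1)` can be
continued one more step. -/
def Extendable {m n : Type*} [Fintype n] (V1 V0 : Matrix m n ℝ) (v0 : m → ℝ) : Prop :=
  ∀ u0 u1 : n → ℝ, V1 *ᵥ u1 + V0 *ᵥ u0 ≤ v0 → ∃ u2 : n → ℝ, V1 *ᵥ u2 + V0 *ᵥ u1 ≤ v0

/-- The stacked matrix `[[ℭ, 0], [𝔊_d, 𝔊_z]]`, where the block decomposition
`𝔊 = [𝔊_d, 𝔊_z]` corresponds to the `Sum`-indexed columns of `G`. -/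
def Stack2 {sC sG nd nz : ℕ} (C : Matrix (Fin sC) (Fin nd) ℝ)
    (G : Matrix (Fin sG) (Fin nd ⊕ Fin nz) ℝ) :
    Matrix (Fin sC ⊕ Fin sG) (Fin nd ⊕ Fin nz) ℝ :=
  Matrix.of (Sum.elim (fun i => Sum.elim (C i) (fun _ => 0)) (fun i => G i))

/-- The stacked matrix `[[ℭ, 0, 0], [𝔊_d, 𝔊_z, 0], [0, ℌ_z, ℌ_y]]`, where
`𝔊 = [𝔊_d, 𝔊_z]` and `ℌ = [ℌ_z, ℌ_y]` correspond to the `Sum`-indexed columns of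
`G` and `H`. -/
def Stack3 {sC sG sH nd nz ny : ℕ} (C : Matrix (Fin sC) (Fin nd) ℝ)
    (G : Matrix (Fin sG) (Fin nd ⊕ Fin nz) ℝ)
    (H : Matrix (Fin sH) (Fin nz ⊕ Fin ny) ℝ) :
    Matrix (Fin sC ⊕ Fin sG ⊕ Fin sH) (Fin nd ⊕ Fin nz ⊕ Fin ny) ℝ :=
  Matrix.of (Sum.elim
    (fun i => Sum.elim (C i) (fun _ => 0))
    (Sum.elim
      (fun i => Sum.elim (fun j => G i (Sum.inl j))
        (Sum.elim (fun j => G i (Sum.inr j)) (fun _ => 0)))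
      (fun i => Sum.elim (fun _ => 0) (H i))))

/-!
Extendability lets every one-step-feasible pair be continued, step by step, to a whole signal
satisfying the constraints. Continuing `(d0, d1)` under `ℭ` gives a signal in `D ⊆ D⊗ ⊆ D1`, whose
first step is (i). Continuing `([d0; z0], [d1; z1])` under the stacked triple gives a pair `(d, z)`
with `d ∈ D` and `(d, z) ∈ Ω1`, so `z ∈ D2`, whose first step is (ii).
-/

theorem Extendable.exists_signal {m n : Type*} [Fintype n] {V1 V0 : Matrix m n ℝ}
    {v0 : m → ℝ} (hext : Extendable V1 V0 v0) {u0 u1 : n → ℝ}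
    (h : V1 *ᵥ u1 + V0 *ᵥ u0 ≤ v0) :
    ∃ u : ℕ → n → ℝ, u 0 = u0 ∧ u 1 = u1 ∧ ∀ k, V1 *ᵥ u (k + 1) + V0 *ᵥ u k ≤ v0 := by
  let pairs : ℕ → {p : (n → ℝ) × (n → ℝ) // V1 *ᵥ p.2 + V0 *ᵥ p.1 ≤ v0} := fun k =>
    Nat.rec ⟨(u0, u1), h⟩
      (fun _ p => ⟨(p.1.2, (hext _ _ p.2).choose), (hext _ _ p.2).choose_spec⟩) k
  exact ⟨fun k => (pairs k).1.1, rfl, rfl, fun k => (pairs k).2⟩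

theorem stack2_mulVec {sC sG nd nz : ℕ} (C : Matrix (Fin sC) (Fin nd) ℝ)
    (G : Matrix (Fin sG) (Fin nd ⊕ Fin nz) ℝ) (w : Fin nd ⊕ Fin nz → ℝ) :
    Stack2 C G *ᵥ w = Sum.elim (C *ᵥ (w ∘ Sum.inl)) (G *ᵥ w) := by
  funext i
  cases i <;> simp [Stack2, mulVec, dotProduct, Fintype.sum_sum_type]

theorem stack2_mulVec_add_stack2_mulVec_le_iff {sC sG nd nz : ℕ}
    (C1 C0 : Matrix (Fin sC) (Fin nd) ℝ) (G1 G0 : Matrix (Fin sG) (Fin nd ⊕ Fin nz) ℝ)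
    (c0 : Fin sC → ℝ) (g0 : Fin sG → ℝ) (w1 w0 : Fin nd ⊕ Fin nz → ℝ) :
    Stack2 C1 G1 *ᵥ w1 + Stack2 C0 G0 *ᵥ w0 ≤ Sum.elim c0 g0 ↔
      C1 *ᵥ (w1 ∘ Sum.inl) + C0 *ᵥ (w0 ∘ Sum.inl) ≤ c0 ∧ G1 *ᵥ w1 + G0 *ᵥ w0 ≤ g0 := by
  rw [stack2_mulVec, stack2_mulVec, ← Sum.elim_add_add, Sum.elim_le_elim_iff]

theorem mem_linAssump_and_mem_linGuar_of_stack2 {sC sG nd nz : ℕ}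
    {C1 C0 : Matrix (Fin sC) (Fin nd) ℝ} {G1 G0 : Matrix (Fin sG) (Fin nd ⊕ Fin nz) ℝ}
    {c0 : Fin sC → ℝ} {g0 : Fin sG → ℝ} {w : ℕ → Fin nd ⊕ Fin nz → ℝ}
    (hw : ∀ k, Stack2 C1 G1 *ᵥ w (k + 1) + Stack2 C0 G0 *ᵥ w k ≤ Sum.elim c0 g0) :
    (fun k => w k ∘ Sum.inl) ∈ LinAssump C1 C0 c0 ∧
      ((fun k => w k ∘ Sum.inl), (fun k => w k ∘ Sum.inr)) ∈ LinGuar G1 G0 g0 := by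
  have hsplit := fun k => (stack2_mulVec_add_stack2_mulVec_le_iff C1 C0 G1 G0 c0 g0 _ _).1 (hw k)
  refine ⟨fun k => (hsplit k).1, fun k => ?_⟩
  simpa only [Sum.elim_comp_inl_inr] using (hsplit k).2

theorem implications_of_assumptions_subset_general {nd nz sA sG sB sC : ℕ}
    (A1 A0 : Matrix (Fin sA) (Fin nd) ℝ) (a0 : Fin sA → ℝ)
    (G1 G0 : Matrix (Fin sG) (Fin nd ⊕ Fin nz) ℝ) (g0 : Fin sG → ℝ)
    (B1 B0 : Matrix (Fin sB) (Fin nz) ℝ) (b0 : Fin sB → ℝ)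
    (Cc1 Cc0 : Matrix (Fin sC) (Fin nd) ℝ) (c0 : Fin sC → ℝ)
    (hext1 : Extendable Cc1 Cc0 c0)
    (hext2 : Extendable (Stack2 Cc1 G1) (Stack2 Cc0 G0) (Sum.elim c0 g0))
    (hsub : LinAssump Cc1 Cc0 c0 ⊆
      CompD (LinAssump A1 A0 a0) (LinGuar G1 G0 g0) (LinAssump B1 B0 b0)) :
    (∀ d0 d1 : Fin nd → ℝ,
      Cc1 *ᵥ d1 + Cc0 *ᵥ d0 ≤ c0 → A1 *ᵥ d1 + A0 *ᵥ d0 ≤ a0) ∧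
    (∀ (d0 d1 : Fin nd → ℝ) (z0 z1 : Fin nz → ℝ),
      Cc1 *ᵥ d1 + Cc0 *ᵥ d0 ≤ c0 →
      G1 *ᵥ Sum.elim d1 z1 + G0 *ᵥ Sum.elim d0 z0 ≤ g0 →
      B1 *ᵥ z1 + B0 *ᵥ z0 ≤ b0) := by
  constructor
  · intro d0 d1 hC
    obtain ⟨d, rfl, rfl, hd⟩ := hext1.exists_signal hC
    exact (hsub hd).1 0
  · intro d0 d1 z0 z1 hC hG
    have hinit := (stack2_mulVec_add_stack2_mulVec_le_iff Cc1 Cc0 G1 G0 c0 g0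
      (Sum.elim d1 z1) (Sum.elim d0 z0)).2 ⟨by simpa only [Sum.elim_comp_inl] using hC, hG⟩
    obtain ⟨w, hw0, hw1, hw⟩ := hext2.exists_signal hinit
    obtain ⟨hd, hdz⟩ := mem_linAssump_and_mem_linGuar_of_stack2 hw
    simpa only [hw0, hw1, Sum.elim_comp_inr] using (hsub hd).2 _ hdz 0

/-- Converse direction for assumptions, under extendability: `D ⊆ D⊗` implies the two
vector implications. -/
theorem implications_of_assumptions_subset {nd nz ny sA sG sB sH sC : ℕ}
    (A1 A0 : Matrix (Fin sA) (Fin nd) ℝ) (a0 : Fin sA → ℝ)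
    (G1 G0 : Matrix (Fin sG) (Fin nd ⊕ Fin nz) ℝ) (g0 : Fin sG → ℝ)
    (B1 B0 : Matrix (Fin sB) (Fin nz) ℝ) (b0 : Fin sB → ℝ)
    (H1 H0 : Matrix (Fin sH) (Fin nz ⊕ Fin ny) ℝ) (h0 : Fin sH → ℝ)
    (Cc1 Cc0 : Matrix (Fin sC) (Fin nd) ℝ) (c0 : Fin sC → ℝ)
    (hext1 : Extendable Cc1 Cc0 c0)
    (hext2 : Extendable (Stack2 Cc1 G1) (Stack2 Cc0 G0) (Sum.elim c0 g0))
    (hsub : LinAssump Cc1 Cc0 c0 ⊆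
      CompD (LinAssump A1 A0 a0) (LinGuar G1 G0 g0) (LinAssump B1 B0 b0)) :
    (∀ d0 d1 : Fin nd → ℝ,
      Cc1 *ᵥ d1 + Cc0 *ᵥ d0 ≤ c0 → A1 *ᵥ d1 + A0 *ᵥ d0 ≤ a0) ∧
    (∀ (d0 d1 : Fin nd → ℝ) (z0 z1 : Fin nz → ℝ),
      Cc1 *ᵥ d1 + Cc0 *ᵥ d0 ≤ c0 →
      G1 *ᵥ Sum.elim d1 z1 + G0 *ᵥ Sum.elim d0 z0 ≤ g0 →
      B1 *ᵥ z1 + B0 *ᵥ z0 ≤ b0) :=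
  implications_of_assumptions_subset_general A1 A0 a0 G1 G0 g0 B1 B0 b0 Cc1 Cc0 c0 hext1 hext2 hsub
end

section
/- Converse direction for guarantees, under extendability: let C1 = (D1, Ω1), C2 = (D2, Ω2), C = (D, Ω) be linear contracts defined by the data (𝔄¹, 𝔄⁰, 𝔞⁰, 𝔊¹, 𝔊⁰, 𝔤⁰), (𝔅¹, 𝔅⁰, 𝔟⁰, ℌ¹, ℌ⁰, 𝔥⁰) and (ℭ¹, ℭ⁰, 𝔠⁰, 𝔍¹, 𝔍⁰, 𝔧⁰), and write 𝔊^i = [𝔊^i_d, 𝔊^i_z], ℌ^i = [ℌ^i_z, ℌ^i_y] for i = 0, 1. Assume the stacked triple ([[ℭ¹, 0, 0], [𝔊¹_d, 𝔊¹_z, 0], [0, ℌ¹_z, ℌ¹_y]], [[ℭ⁰, 0, 0], [𝔊⁰_d, 𝔊⁰_z, 0], [0, ℌ⁰_z, ℌ⁰_y]], [𝔠⁰; 𝔤⁰; 𝔥⁰]) is extendable. If Ω⊗ ∩ (D × S^{ny}) ⊆ Ω ∩ (D × S^{ny}), where Ω⊗ is the guarantee set of the cascaded composition C1 ⊗ C2,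 then for all vectors d0, d1 ∈ ℝ^{nd}, z0, z1 ∈ ℝ^{nz}, y0, y1 ∈ ℝ^{ny}: ℭ¹d1 + ℭ⁰d0 ≤ 𝔠⁰, 𝔊¹[d1; z1] + 𝔊⁰[d0; z0] ≤ 𝔤⁰ and ℌ¹[z1; y1] + ℌ⁰[z0; y0] ≤ 𝔥⁰ together imply 𝔍¹[d1; y1] + 𝔍⁰[d0; y0] ≤ 𝔧⁰. -/
/-!
By extendability of the stacked triple, a pair of consecutive values `[d; z; y]` satisfying the
three one-step constraints continues to whole signals `d, z, y` satisfying them at every time.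
Then `(d, y)` lies in `Ω⊗` (witnessed by `z`) with `d ∈ D`, hence in `Ω`, and the constraint of
`Ω` at time `0` is the claimed inequality.
-/

open Matrix

theorem Extendable.exists_seq {m n : Type*} [Fintype n] {V1 V0 : Matrix m n ℝ}
    {v0 : m → ℝ} (hext : Extendable V1 V0 v0) {u0 u1 : n → ℝ}
    (h01 : V1 *ᵥ u1 + V0 *ᵥ u0 ≤ v0) :
    ∃ u : ℕ → n → ℝ, u 0 = u0 ∧ u 1 = u1 ∧ ∀ k, V1 *ᵥ u (k + 1) + V0 *ᵥ u k ≤ v0 := by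
  let Feasible := {p : (n → ℝ) × (n → ℝ) // V1 *ᵥ p.2 + V0 *ᵥ p.1 ≤ v0}
  have hstep : ∀ p : Feasible, ∃ q : Feasible, q.1.1 = p.1.2 := fun p =>
    let ⟨u2, h⟩ := hext _ _ p.2
    ⟨⟨(p.1.2, u2), h⟩, rfl⟩
  choose next hnext using hstep
  have hsucc : ∀ (p : Feasible) k, (next^[k + 1] p).1.1 = (next^[k] p).1.2 := fun p k => by
    rw [Function.iterate_succ_apply', hnext]
  refine ⟨fun k => (next^[k] ⟨(u0, u1), h01⟩).1.1, rfl, hsucc _ 0, fun k => ?_⟩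
  simpa only [hsucc] using (next^[k] _).2

lemma stack3_mulVec {sC sG sH nd nz ny : ℕ} (C : Matrix (Fin sC) (Fin nd) ℝ)
    (G : Matrix (Fin sG) (Fin nd ⊕ Fin nz) ℝ) (H : Matrix (Fin sH) (Fin nz ⊕ Fin ny) ℝ)
    (d : Fin nd → ℝ) (z : Fin nz → ℝ) (y : Fin ny → ℝ) :
    Stack3 C G H *ᵥ Sum.elim d (Sum.elim z y) =
      Sum.elim (C *ᵥ d) (Sum.elim (G *ᵥ Sum.elim d z) (H *ᵥ Sum.elim z y)) := by
  funext i
  rcases i with i | i | i <;>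
    simp [Stack3, Matrix.mulVec, dotProduct, Fintype.sum_sum_type]

lemma stack3_step_le_iff {sC sG sH nd nz ny : ℕ} (C1 C0 : Matrix (Fin sC) (Fin nd) ℝ)
    (G1 G0 : Matrix (Fin sG) (Fin nd ⊕ Fin nz) ℝ) (H1 H0 : Matrix (Fin sH) (Fin nz ⊕ Fin ny) ℝ)
    (c0 : Fin sC → ℝ) (g0 : Fin sG → ℝ) (h0 : Fin sH → ℝ)
    (d0 d1 : Fin nd → ℝ) (z0 z1 : Fin nz → ℝ) (y0 y1 : Fin ny → ℝ) :
    Stack3 C1 G1 H1 *ᵥ Sum.elim d1 (Sum.elim z1 y1) +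
        Stack3 C0 G0 H0 *ᵥ Sum.elim d0 (Sum.elim z0 y0) ≤ Sum.elim c0 (Sum.elim g0 h0) ↔
      C1 *ᵥ d1 + C0 *ᵥ d0 ≤ c0 ∧
        G1 *ᵥ Sum.elim d1 z1 + G0 *ᵥ Sum.elim d0 z0 ≤ g0 ∧
        H1 *ᵥ Sum.elim z1 y1 + H0 *ᵥ Sum.elim z0 y0 ≤ h0 := by
  simp only [stack3_mulVec, ← Sum.elim_add_add, Sum.elim_le_elim_iff]

/-- Converse direction for guarantees, under extendability of the three-block stacked
triple: `Ω⊗ ∩ (D × S^{ny}) ⊆ Ω ∩ (D × S^{ny})` implies the third vector implication. -/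
theorem implication_of_guarantees_subset {nd nz ny sG sH sC sJ : ℕ}
    (G1 G0 : Matrix (Fin sG) (Fin nd ⊕ Fin nz) ℝ) (g0 : Fin sG → ℝ)
    (H1 H0 : Matrix (Fin sH) (Fin nz ⊕ Fin ny) ℝ) (h0 : Fin sH → ℝ)
    (Cc1 Cc0 : Matrix (Fin sC) (Fin nd) ℝ) (c0 : Fin sC → ℝ)
    (J1 J0 : Matrix (Fin sJ) (Fin nd ⊕ Fin ny) ℝ) (j0 : Fin sJ → ℝ)
    (hext3 : Extendable (Stack3 Cc1 G1 H1) (Stack3 Cc0 G0 H0)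
      (Sum.elim c0 (Sum.elim g0 h0)))
    (hsub : CompΩ (LinGuar G1 G0 g0) (LinGuar H1 H0 h0)
        ∩ (LinAssump Cc1 Cc0 c0 ×ˢ (Set.univ : Set (Sig ny))) ⊆
      LinGuar J1 J0 j0 ∩ (LinAssump Cc1 Cc0 c0 ×ˢ (Set.univ : Set (Sig ny)))) :
    ∀ (d0 d1 : Fin nd → ℝ) (z0 z1 : Fin nz → ℝ) (y0 y1 : Fin ny → ℝ),
      Cc1 *ᵥ d1 + Cc0 *ᵥ d0 ≤ c0 →
      G1 *ᵥ Sum.elim d1 z1 + G0 *ᵥ Sum.elim d0 z0 ≤ g0 →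
      H1 *ᵥ Sum.elim z1 y1 + H0 *ᵥ Sum.elim z0 y0 ≤ h0 →
      J1 *ᵥ Sum.elim d1 y1 + J0 *ᵥ Sum.elim d0 y0 ≤ j0 := by
  intro d0 d1 z0 z1 y0 y1 hc hg hh
  obtain ⟨u, hu0, hu1, hu⟩ := hext3.exists_seq ((stack3_step_le_iff ..).2 ⟨hc, hg, hh⟩)
  let d : Sig nd := fun k => u k ∘ Sum.inl
  let z : Sig nz := fun k => (u k ∘ Sum.inr) ∘ Sum.inl
  let y : Sig ny := fun k => (u k ∘ Sum.inr) ∘ Sum.inr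
  have hsplit : ∀ k, u k = Sum.elim (d k) (Sum.elim (z k) (y k)) := fun k => by
    simp only [d, z, y, Sum.elim_comp_inl_inr]
  have hstep : ∀ k, _ := fun k => (stack3_step_le_iff ..).1 (hsplit k ▸ hsplit (k + 1) ▸ hu k)
  have hmem : (d, y) ∈ CompΩ (LinGuar G1 G0 g0) (LinGuar H1 H0 h0)
      ∩ (LinAssump Cc1 Cc0 c0 ×ˢ (Set.univ : Set (Sig ny))) :=
    ⟨⟨z, fun k => (hstep k).2.1, fun k => (hstep k).2.2⟩, fun k => (hstep k).1, trivial⟩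
  simpa only [d, y, hu0, hu1, Sum.elim_comp_inl, Sum.elim_comp_inr] using (hsub hmem).1 0
end
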